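/- Open-box effect lemma for CLC^1 (Lemma 3): if the heap H is well-typed (⊢ H : ⋆), the frame stack F ∘ FS is well-typed (either H ⊢ F ∘ FS or H ⊢_x^σ F ∘ FS for some return variable x and type σ), and H ; a ⊢ F ∘ FS ok, then openbox(H, ô, F, FS) for some object identifier ô implies a = ocap — i.e., any frame in which a box rooted lower in the stack is open must be type-checked under the ocap effect. -/

import Mathlib

namespace CLC1

/-! # CLC¹: a typed object-oriented core language with object capabilities -/

abbrev VarName := ℕ
abbrev FieldName := ℕ
abbrev MethodName := ℕ
abbrev ClassName := ℕ
abbrev ObjId := ℕ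

/-- The reserved variable name `global`. -/
def globalVar : VarName := 0

/-- The reserved variable name `this`. -/
def thisVar : VarName := 1

/-- The root class `AnyRef`. -/
def AnyRefC : ClassName := 0

/-- Types: class types `C`, box types `Box[C]`, and `Null`. -/
inductive Ty where
  | cls : ClassName → Ty
  | box : ClassName → Ty
  | null : Ty
deriving DecidableEq

mutual
/-- Terms (A-normal form): variables and let bindings. -/
inductive Tm where
  | var : VarName → Tm
  | lett : VarName → Expr → Tm → Tm

/-- Expressions. -/
inductive Expr where
  | null : Expr
  | var : VarName → Expr
  | select : VarName → FieldName → Expr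
  | assign : VarName → FieldName → VarName → Expr
  | new : ClassName → Expr
  | invoke : VarName → MethodName → VarName → Expr
  | box : ClassName → Expr
  | openb : VarName → VarName → Tm → Expr
end

/-- A method definition `def m(x : σ) : τ = t`. -/
structure MethodDef where
  param : VarName
  paramTy : Ty
  retTy : Ty
  body : Tm

/-- A class definition `class C extends D { vd… md… }` (fields have class types). -/
structure ClassDef where
  sup : ClassName
  fields : List (FieldName × ClassName)
  methods : List (MethodName × MethodDef)

/-- A class table (the class definitions of a program); `AnyRef` is not declared. -/
structure ClassTable where
  classes : ClassName → Option ClassDef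
  anyRefRoot : classes AnyRefC = none

/-- Subtyping: generated by the class table, covariant boxes and `Null <: σ`. -/
inductive Subty (CT : ClassTable) : Ty → Ty → Prop
  | refl (σ : Ty) : Subty CT σ σ
  | trans : Subty CT σ₁ σ₂ → Subty CT σ₂ σ₃ → Subty CT σ₁ σ₃
  | ext : CT.classes C = some cd → Subty CT (.cls C) (.cls cd.sup)
  | box : Subty CT (.cls C) (.cls D) → Subty CT (.box C) (.box D)
  | nullSub (σ : Ty) : Subty CT .null σ

/-- `HasField CT C f D` means `f ∈ fields(C)` with `ftype(C, f) = D`. -/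
inductive HasField (CT : ClassTable) : ClassName → FieldName → ClassName → Prop
  | here : CT.classes C = some cd → (f, D) ∈ cd.fields → HasField CT C f D
  | inherited : CT.classes C = some cd → HasField CT cd.sup f D → HasField CT C f D

/-- Dynamic method lookup: `mbody(C, m) = md`. -/
inductive MBody (CT : ClassTable) : ClassName → MethodName → MethodDef → Prop
  | here : CT.classes C = some cd → (m, md) ∈ cd.methods → MBody CT C m md
  | inherited : CT.classes C = some cd → (∀ md', (m, md') ∉ cd.methods) →
      MBody CT cd.sup m md → MBody CT C m md

/-- `mtype(C, m) = σ → τ`. -/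
def MType (CT : ClassTable) (C : ClassName) (m : MethodName) (σ τ : Ty) : Prop :=
  ∃ md, MBody CT C m md ∧ md.paramTy = σ ∧ md.retTy = τ

/-- Run-time values: `null`, object references `o`, and box references `b(o)`. -/
inductive Val where
  | null : Val
  | ref : ObjId → Val
  | box : ObjId → Val
deriving DecidableEq

abbrev FieldMap := FieldName → Option Val
abbrev Heap := ObjId → Option (ClassName × FieldMap)
abbrev Env := VarName → Option Val

/-- `typeof(H, o)`: the dynamic class of object `o`. -/
def typeofH (H : Heap) (o : ObjId) : Option ClassName := (H o).map Prod.fst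

def updEnv (L : Env) (x : VarName) (v : Val) : Env :=
  fun y => if y = x then some v else L y

def updField (FM : FieldMap) (f : FieldName) (v : Val) : FieldMap :=
  fun g => if g = f then some v else FM g

def updHeap (H : Heap) (o : ObjId) (obj : ClassName × FieldMap) : Heap :=
  fun o' => if o' = o then some obj else H o'

open Classical in
/-- The field map of a newly allocated `C` object: all fields of `C` set to `null`. -/
noncomputable def initFields (CT : ClassTable) (C : ClassName) : FieldMap :=
  fun f => if ∃ D, HasField CT C f D then some .null else none

/-- The global environment `L₀ = { global ↦ o_g }`. -/
def globalEnv (og : ObjId) : Env :=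
  fun x => if x = globalVar then some (.ref og) else none

/-- Frame annotations: `ε` or a variable. -/
inductive Ann where
  | eps : Ann
  | var : VarName → Ann
deriving DecidableEq

/-- A frame `⟨L, t⟩^l`. -/
structure Frame where
  env : Env
  tm : Tm
  ann : Ann

abbrev FrameStack := List Frame

/-- Single-frame reduction `H, F → H', F'`. -/
inductive StepF (CT : ClassTable) : Heap → Frame → Heap → Frame → Prop
  | null :
      StepF CT H ⟨L, .lett x .null t, l⟩ H ⟨updEnv L x .null, t, l⟩
  | var : L y = some v →
      StepF CT H ⟨L, .lett x (.var y) t, l⟩ H ⟨updEnv L x v, t, l⟩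
  | select : L y = some (.ref o) → H o = some (C, FM) → FM f = some v →
      StepF CT H ⟨L, .lett x (.select y f) t, l⟩ H ⟨updEnv L x v, t, l⟩
  | assign : L y = some (.ref o) → H o = some (C, FM) → L z = some v →
      StepF CT H ⟨L, .lett x (.assign y f z) t, l⟩
        (updHeap H o (C, updField FM f v)) ⟨L, .lett x (.var z) t, l⟩
  | new : H o = none →
      StepF CT H ⟨L, .lett x (.new C) t, l⟩
        (updHeap H o (C, initFields CT C)) ⟨updEnv L x (.ref o), t, l⟩
  | box : H o = none →
      StepF CT H ⟨L, .lett x (.box C) t, l⟩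
        (updHeap H o (C, initFields CT C)) ⟨updEnv L x (.box o), t, l⟩

/-- Frame-stack reduction `H, FS ↠ H', FS'`. -/
inductive StepFS (CT : ClassTable) (og : ObjId) :
    Heap → FrameStack → Heap → FrameStack → Prop
  | invoke : L y = some (.ref o) → H o = some (C, FM) → MBody CT C m md → L z = some v →
      StepFS CT og H (⟨L, .lett x (.invoke y m z) t, l⟩ :: FS) H
        (⟨updEnv (updEnv (globalEnv og) thisVar (.ref o)) md.param v, md.body, .var x⟩ ::
          ⟨L, t, l⟩ :: FS)
  | return1 : L x = some v →
      StepFS CT og H (⟨L, .var x, .var y⟩ :: ⟨L', t', l⟩ :: FS) H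
        (⟨updEnv L' y v, t', l⟩ :: FS)
  | return2 :
      StepFS CT og H (⟨L, .var x, .eps⟩ :: ⟨L', t', l⟩ :: FS) H (⟨L', t', l⟩ :: FS)
  | openb : L y = some (.box o) →
      StepFS CT og H (⟨L, .lett x (.openb y z t') t, l⟩ :: FS) H
        (⟨updEnv (fun _ => none) z (.ref o), t', .eps⟩ :: ⟨updEnv L x (.box o), t, l⟩ :: FS)
  | frame : StepF CT H F H' F' →
      StepFS CT og H (F :: FS) H' (F' :: FS)

/-- Type environments. -/
abbrev TyEnv := VarName → Option Ty

def updTy (Γ : TyEnv) (x : VarName) (σ : Ty) : TyEnv :=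
  fun y => if y = x then some σ else Γ y

def emptyTyEnv : TyEnv := fun _ => none

/-- Effects: the unrestricted effect `ε` and the `ocap` effect. -/
inductive Eff where
  | eps : Eff
  | ocap : Eff
deriving DecidableEq

mutual
/-- Term typing `Γ ; a ⊢ t : σ`. -/
inductive TyTm (CT : ClassTable) : TyEnv → Eff → Tm → Ty → Prop
  | var : Γ x = some σ → TyTm CT Γ a (.var x) σ
  | lett : TyExpr CT Γ a e τ → TyTm CT (updTy Γ x τ) a t σ →
      TyTm CT Γ a (.lett x e t) σ

/-- Expression typing `Γ ; a ⊢ e : σ`. -/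
inductive TyExpr (CT : ClassTable) : TyEnv → Eff → Expr → Ty → Prop
  | null : TyExpr CT Γ a .null .null
  | var : Γ x = some σ → TyExpr CT Γ a (.var x) σ
  | select : Γ x = some (.cls C) → HasField CT C f D →
      TyExpr CT Γ a (.select x f) (.cls D)
  | assign : Γ x = some (.cls C) → HasField CT C f D →
      Γ y = some σ' → Subty CT σ' (.cls D) →
      TyExpr CT Γ a (.assign x f y) (.cls D)
  | new : (a = .ocap → Ocap CT C) → TyExpr CT Γ a (.new C) (.cls C)
  | invoke : Γ x = some (.cls C) → MType CT C m σ τ →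
      Γ y = some σ' → Subty CT σ' σ →
      TyExpr CT Γ a (.invoke x m y) τ
  | box : Ocap CT C → TyExpr CT Γ a (.box C) (.box C)
  | openb : Γ x = some (.box C) →
      TyTm CT (updTy emptyTyEnv y (.cls C)) .ocap t σ →
      TyExpr CT Γ a (.openb x y t) (.box C)

/-- The object-capability discipline `ocap(C)`. -/
inductive Ocap (CT : ClassTable) : ClassName → Prop
  | anyRef : Ocap CT AnyRefC
  | cls (τsel : MethodName → MethodDef → Ty) : CT.classes C = some cd → Ocap CT cd.sup →
      (∀ f D, (f, D) ∈ cd.fields → Ocap CT D) →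
      (∀ m md, (m, md) ∈ cd.methods →
        TyTm CT (updTy (updTy emptyTyEnv thisVar (.cls C)) md.param md.paramTy)
          .ocap md.body (τsel m md)) →
      (∀ m md, (m, md) ∈ cd.methods → Subty CT (τsel m md) md.retTy) →
      Ocap CT C
end

/-- `dom(FM) = fields(C)` for every object in the heap. -/
def HeapDomOk (CT : ClassTable) (H : Heap) : Prop :=
  ∀ o C FM, H o = some (C, FM) → ∀ f, (FM f).isSome ↔ ∃ D, HasField CT C f D

/-- Every non-null field value's dynamic type is a subtype of the declared field type. -/
def HeapFieldsOk (CT : ClassTable) (H : Heap) : Prop :=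
  ∀ o C FM f v, H o = some (C, FM) → FM f = some v →
    v = .null ∨
    ∃ o' C' D, v = .ref o' ∧ typeofH H o' = some C' ∧ HasField CT C f D ∧
      Subty CT (.cls C') (.cls D)

/-- Well-typed heap `⊢ H : ⋆` (Definition 4.2). -/
def HeapOk (CT : ClassTable) (H : Heap) : Prop :=
  HeapDomOk CT H ∧ HeapFieldsOk CT H

/-- `H ⊢ Γ ; L ; x` (WF-Var). -/
def WFVar (CT : ClassTable) (H : Heap) (Γ : TyEnv) (L : Env) (x : VarName) : Prop :=
  L x = some .null ∨
  (∃ o C C', L x = some (.ref o) ∧ Γ x = some (.cls C) ∧ typeofH H o = some C' ∧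
    Subty CT (.cls C') (.cls C)) ∨
  (∃ o C C', L x = some (.box o) ∧ Γ x = some (.box C) ∧ typeofH H o = some C' ∧
    Subty CT (.cls C') (.cls C))

/-- `H ⊢ Γ ; L` (WF-Env). -/
def WFEnv (CT : ClassTable) (H : Heap) (Γ : TyEnv) (L : Env) : Prop :=
  (∀ x, (Γ x).isSome → (L x).isSome) ∧ ∀ x, (Γ x).isSome → WFVar CT H Γ L x

/-- Frame typing `H ⊢ F : σ` (T-Frame1). -/
def WFFrame (CT : ClassTable) (H : Heap) (F : Frame) (σ : Ty) : Prop :=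
  ∃ Γ a, TyTm CT Γ a F.tm σ ∧ WFEnv CT H Γ F.env

/-- Annotated frame typing `H ⊢ₓᵗ F : σ` (T-Frame2). -/
def WFFrameAnn (CT : ClassTable) (H : Heap) (x : VarName) (τ : Ty) (F : Frame) (σ : Ty) :
    Prop :=
  ∃ Γ a, TyTm CT (updTy Γ x τ) a F.tm σ ∧ WFEnv CT H Γ F.env

/-- Frame-stack typing `H ⊢ FS` (index `none`) and `H ⊢ₓᵗ FS` (index `some (x, τ)`),
rules T-EmpFS, T-FS-NA, T-FS-NA2, T-FS-A, T-FS-A2. -/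
inductive WFStack (CT : ClassTable) (H : Heap) :
    Option (VarName × Ty) → FrameStack → Prop
  | emp : WFStack CT H none []
  | na : F.ann = .eps → WFFrame CT H F σ → WFStack CT H none FS →
      WFStack CT H none (F :: FS)
  | na2 : F.ann = .eps → WFFrameAnn CT H x τ F σ → WFStack CT H none FS →
      WFStack CT H (some (x, τ)) (F :: FS)
  | a : F.ann = .var x → WFFrame CT H F τ → WFStack CT H (some (x, τ)) FS →
      WFStack CT H none (F :: FS)
  | a2 : F.ann = .var x → WFFrameAnn CT H y σ F τ → WFStack CT H (some (x, τ)) FS →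
      WFStack CT H (some (y, σ)) (F :: FS)

/-- Heap reachability `reach(H, o, o')`. -/
inductive Reach (H : Heap) : ObjId → ObjId → Prop
  | refl (o : ObjId) : Reach H o o
  | step : Reach H o o' → H o' = some (C, FM) → FM f = some (.ref o'') → Reach H o o''

/-- Separation `sep(H, o, o')` (Definition 4.3). -/
def Sep (H : Heap) (o o' : ObjId) : Prop :=
  ∀ q q', Reach H o q → Reach H o' q' → q ≠ q'

/-- Box separation for a frame (Definition 4.4). -/
def BoxSep (H : Heap) (F : Frame) : Prop :=
  ∀ x y o o', F.env x = some (.box o) → F.env y = some (.box o') → o ≠ o' → Sep H o o'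

/-- Box–object separation (Definition 4.5). -/
def BoxObjSep (H : Heap) (F : Frame) : Prop :=
  ∀ x y o o', F.env x = some (.box o) → F.env y = some (.ref o') → Sep H o o'

/-- Box ocap invariant (Definition 4.6). -/
def BoxOcap (CT : ClassTable) (H : Heap) (F : Frame) : Prop :=
  ∀ x o o', F.env x = some (.box o) → Reach H o o' →
    ∃ C, typeofH H o' = some C ∧ Ocap CT C

/-- Global ocap separation (Definition 4.7). -/
def GlobalOcapSep (CT : ClassTable) (og : ObjId) (H : Heap) (F : Frame) : Prop :=
  ∀ x o, F.env x = some (.ref o) →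
    (∃ C, typeofH H o = some C ∧ Ocap CT C) ∧
    ∀ y o', globalEnv og y = some (.ref o') → Sep H o o'

/-- `H ; a ⊢ F ok` (F-ok). -/
def FrameOk (CT : ClassTable) (og : ObjId) (H : Heap) (a : Eff) (F : Frame) : Prop :=
  BoxSep H F ∧ BoxObjSep H F ∧ BoxOcap CT H F ∧ (a = .ocap → GlobalOcapSep CT og H F)

/-- `boxRoot(o, F)`. -/
def BoxRootF (o : ObjId) (F : Frame) : Prop := ∃ x, F.env x = some (.box o)

/-- `boxRoot(o, FS)`. -/
def BoxRootFS (o : ObjId) (FS : FrameStack) : Prop := ∃ F ∈ FS, BoxRootF o F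

/-- `openbox(H, o, F, FS)`. -/
def OpenBox (H : Heap) (o : ObjId) (F : Frame) (FS : FrameStack) : Prop :=
  BoxRootFS o FS ∧ ∃ x o', F.env x = some (.ref o') ∧ Reach H o o'

/-- `boxSeparation(H, F, FS)` (Definition 4.8). -/
def BoxSeparation (H : Heap) (F : Frame) (FS : FrameStack) : Prop :=
  ∀ o o', BoxRootF o F → BoxRootFS o' FS → o ≠ o' → Sep H o o'

/-- `uniqueOpenBox(H, F, FS)` (Definition 4.9). -/
def UniqueOpenBox (H : Heap) (F : Frame) (FS : FrameStack) : Prop :=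
  ∀ o o', OpenBox H o F FS → OpenBox H o' F FS → o = o'

/-- `openBoxPropagation(H, F^l, FS)` (Definition 4.10). -/
def OpenBoxPropagation (H : Heap) (F : Frame) (FS : FrameStack) : Prop :=
  F.ann ≠ .eps → ∀ G GS, FS = G :: GS → ∀ o, OpenBox H o F FS → OpenBox H o G GS

/-- `H ; a ⊢ FS ok` (SingFS-ok, FS-ok). -/
inductive StackOk (CT : ClassTable) (og : ObjId) (H : Heap) : Eff → FrameStack → Prop
  | sing : FrameOk CT og H a F → StackOk CT og H a [F]
  | cons : FrameOk CT og H b F → StackOk CT og H a FS →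
      b = (if a = .ocap ∨ F.ann = .eps then .ocap else .eps) →
      BoxSeparation H F FS → UniqueOpenBox H F FS → OpenBoxPropagation H F FS →
      StackOk CT og H b (F :: FS)

/-- The global type environment `Γ₀ = { global : C_g }`. -/
def globalTyEnv (Cg : ClassName) : TyEnv :=
  fun v => if v = globalVar then some (.cls Cg) else none

/-- Well-formedness of the class table (WF-Class, WF-Override, WF-Method),
where `Cg` is the synthetic class of global variables. -/
def WFTable (CT : ClassTable) (Cg : ClassName) : Prop :=
  ∀ C cd, CT.classes C = some cd →
    (∀ m md, (m, md) ∈ cd.methods →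
      (∃ τ', TyTm CT (updTy (updTy (globalTyEnv Cg) thisVar (.cls C)) md.param md.paramTy)
          .eps md.body τ' ∧ Subty CT τ' md.retTy) ∧
      (∀ σ τ, MType CT cd.sup m σ τ → σ = md.paramTy ∧ τ = md.retTy)) ∧
    (∀ f D, (f, D) ∈ cd.fields → ¬ ∃ D', HasField CT cd.sup f D')

theorem not_openBox_nil (H : Heap) (o : ObjId) (F : Frame) : ¬ OpenBox H o F [] :=
  fun ⟨⟨_, hG, _⟩, _⟩ => List.not_mem_nil hG

theorem StackOk.eq_ocap_of_openBox {CT : ClassTable} {og : ObjId} {H : Heap} :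
    ∀ {FS : FrameStack} {a : Eff} {F : Frame} {o : ObjId},
      StackOk CT og H a (F :: FS) → OpenBox H o F FS → a = .ocap
  | [], _, _, _, _, hopen => absurd hopen (not_openBox_nil _ _ _)
  | G :: GS, _, F, o, .cons _ hFS hb _ _ hprop, hopen => by
    by_cases hann : F.ann = .eps
    · simp [hb, hann]
    · have hG : OpenBox H o G GS := hprop hann G GS rfl o hopen
      simp [hb, eq_ocap_of_openBox hFS hG]

/-- **Open-box effect lemma for CLC¹** (Lemma 3): if `⊢ H : ⋆`, the stack `F ∘ FS` is
well-typed (plainly or with a pending return), `H ; a ⊢ F ∘ FS ok`, and some box rooted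
in `FS` is open in `F`, then `a = ocap`. -/
theorem clc1_openbox_effect
    (CT : ClassTable) (og : ObjId) (H : Heap) (F : Frame) (FS : FrameStack)
    (a : Eff) (ohat : ObjId)
    (hH : HeapOk CT H)
    (hty : WFStack CT H none (F :: FS) ∨ ∃ x σ, WFStack CT H (some (x, σ)) (F :: FS))
    (hok : StackOk CT og H a (F :: FS))
    (hopen : OpenBox H ohat F FS) :
    a = .ocap :=
  hok.eq_ocap_of_openBox hopen

end CLC1
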